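/- For all nonnegative integers i, j₁, j₂ and all real numbers k₁ and k₂, the MSN1 numbers satisfy the Vandermonde-type convolution Σ_{r=0}^{i} binom(i,r)·c(i-r, j₁, k₁)·c(r, j₂, k₂) = binom(j₁+j₂, j₁)·c(i, j₁+j₂, k₁+k₂). -/
import Mathlib

open Finset

/-- Signed Stirling numbers of the first kind, defined as the coefficients of the
falling factorial polynomial `x*(x-1)*...*(x-i+1) = sum_{r=0}^{i} s(i,r)*x^r`. -/
noncomputable def s (i r : ℕ) : ℝ := (descPochhammer ℝ i).coeff r

/-- Moment generating Stirling numbers of the first kind (MSN1):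
`c(i,j,k) = sum_{r=j}^{i} binom(r,j)*(-k)^(r-j)*s(i,r)` (and `0` if `j > i`). -/
noncomputable def c (i j : ℕ) (k : ℝ) : ℝ :=
  ∑ r ∈ Finset.Icc j i, (r.choose j : ℝ) * (-k) ^ (r - j) * s i r

namespace MSN1Aux

open Polynomial

lemma smeval_int_eq {A : Type*} [CommRing A] (p : Polynomial ℤ) (a : A) :
    p.smeval a = eval₂ (Int.castRingHom A) a p := by
  rw [← Polynomial.eval₂_smulOneHom_eq_smeval ℤ]
  congr 1
  exact Subsingleton.elim _ _

lemma descPoch_smeval_eq_eval {A : Type*} [CommRing A] (n : ℕ) (a : A) :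
    (descPochhammer ℤ n).smeval a = (descPochhammer A n).eval a := by
  rw [smeval_int_eq, ← Polynomial.eval_map, descPochhammer_map]

/-- Chu–Vandermonde for `descPochhammer` over a commutative ring, range form. -/
lemma descPoch_eval_add {A : Type*} [CommRing A] (a b : A) (i : ℕ) :
    (descPochhammer A i).eval (a + b) = ∑ r ∈ range (i + 1),
      (i.choose r : A) * ((descPochhammer A r).eval a * (descPochhammer A (i - r)).eval b) := by
  have h := Ring.descPochhammer_smeval_add (r := a) (s := b) i (Commute.all a b)
  rw [descPoch_smeval_eq_eval] at h
  rw [h, Finset.Nat.sum_antidiagonal_eq_sum_range_succ_mk]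
  refine Finset.sum_congr rfl fun r hr => ?_
  rw [descPoch_smeval_eq_eval, descPoch_smeval_eq_eval]

/-- `c i j k` is the `j`-th coefficient of `descPochhammer` composed with `X - C k`. -/
lemma c_eq_coeff (i j : ℕ) (k : ℝ) :
    c i j k = ((descPochhammer ℝ i).comp (X - C k)).coeff j := by
  have hXC : (X - C k : Polynomial ℝ) = X + C (-k) := by rw [map_neg, sub_eq_add_neg]
  rw [hXC, Polynomial.comp_eq_sum_left, Polynomial.sum_def, Polynomial.finset_sum_coeff]
  have key : ∀ r ∈ (descPochhammer ℝ i).support,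
      (C ((descPochhammer ℝ i).coeff r) * (X + C (-k)) ^ r).coeff j
        = (r.choose j : ℝ) * (-k) ^ (r - j) * s i r := by
    intro r _
    rw [coeff_C_mul, Polynomial.coeff_X_add_C_pow, s]
    ring
  rw [Finset.sum_congr rfl key]
  have hsupp : (descPochhammer ℝ i).support ⊆ range (i + 1) := by
    intro r hr
    simp only [mem_range]
    have := Polynomial.le_natDegree_of_mem_supp r hr
    rw [descPochhammer_natDegree] at this
    omega
  rw [c]
  rw [Finset.sum_subset hsupp, ← Finset.sum_subset
    (show Finset.Icc j i ⊆ range (i+1) from fun r hr => mem_range.mpr (by simp only [mem_Icc] at hr; omega))]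
  · intro r hr hnr
    have hrj : r < j := by
      simp only [mem_range, mem_Icc, not_and, not_le] at hr hnr
      by_contra h
      push_neg at h
      omega
    rw [Nat.choose_eq_zero_of_lt hrj]
    simp
  · intro r hr hnr
    have : (descPochhammer ℝ i).coeff r = 0 := Polynomial.notMem_support_iff.mp hnr
    simp [s, this]

abbrev B := Polynomial ℝ
abbrev A := Polynomial B

lemma coeff_coeff_comp (j₁ j₂ : ℕ) (u : Polynomial ℝ) :
    ((((u.map (C : ℝ →+* B)).comp (X + C X) : A)).coeff j₂).coeff j₁
      = ((j₁ + j₂).choose j₂ : ℝ) * u.coeff (j₁ + j₂) := by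
  induction u using Polynomial.induction_on' with
  | add p q hp hq =>
      rw [Polynomial.map_add, add_comp, coeff_add, coeff_add, hp, hq, coeff_add]
      ring
  | monomial n t =>
      rw [Polynomial.map_monomial, ← Polynomial.C_mul_X_pow_eq_monomial, mul_comp, C_comp,
        pow_comp, X_comp, coeff_C_mul, Polynomial.coeff_X_add_C_pow, coeff_C_mul,
        ← Polynomial.C_eq_natCast, coeff_mul_C,
        Polynomial.coeff_X_pow, Polynomial.coeff_monomial]
      by_cases h : n = j₁ + j₂
      · subst h
        simp [Nat.add_sub_cancel]
        ring
      · simp only [if_neg h, mul_zero]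
        by_cases h2 : j₂ ≤ n
        · have : ¬ (j₁ = n - j₂) := by omega
          rw [if_neg this]
          ring
        · rw [Nat.choose_eq_zero_of_lt (by omega)]
          push_cast
          ring

lemma coeff_coeff_term (j₁ j₂ n : ℕ) (w₂ : Polynomial ℝ) (u₁ : B) :
    (((n : A) * (w₂.map (C : ℝ →+* B) * (C u₁ : A))).coeff j₂).coeff j₁
      = (n : ℝ) * (u₁.coeff j₁ * w₂.coeff j₂) := by
  rw [show ((n : A) * (w₂.map (C : ℝ →+* B) * (C u₁ : A)))
      = (w₂.map (C : ℝ →+* B)) * C ((n : B) * u₁) by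
        rw [Polynomial.C_mul, Polynomial.C_eq_natCast]; ring,
    coeff_mul_C, coeff_map, mul_comm, mul_assoc, ← Polynomial.C_eq_natCast,
    coeff_C_mul, coeff_mul_C]

lemma descPoch_eval_eq_comp {R : Type*} [CommRing R] (n : ℕ) (t : Polynomial R) :
    (descPochhammer (Polynomial R) n).eval t = (descPochhammer R n).comp t := by
  rw [← descPochhammer_map (C : R →+* Polynomial R) n, eval_map]
  rfl

end MSN1Aux

open MSN1Aux Polynomial in
/-- Vandermonde-type convolution for MSN1 numbers:
`sum_{r=0}^{i} binom(i,r)*c(i-r,j₁,k₁)*c(r,j₂,k₂) = binom(j₁+j₂,j₁)*c(i,j₁+j₂,k₁+k₂)`. -/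
theorem msn1_vandermonde_convolution (i j₁ j₂ : ℕ) (k₁ k₂ : ℝ) :
    ∑ r ∈ Finset.range (i + 1), (i.choose r : ℝ) * c (i - r) j₁ k₁ * c r j₂ k₂ =
      ((j₁ + j₂).choose j₁ : ℝ) * c i (j₁ + j₂) (k₁ + k₂) := by
  -- work in A = (ℝ[X])[Y]
  set a : A := X - C (C k₂) with ha
  set b : A := C (X - C k₁) with hb
  have key := descPoch_eval_add a b i
  -- identify both sides after coefficient extraction
  -- LHS of key:
  have hL : (descPochhammer A i).eval (a + b)
      = (((descPochhammer ℝ i).comp (X - C (k₁ + k₂))).map (C : ℝ →+* B)).comp (X + C X) := by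
    rw [descPoch_eval_eq_comp, Polynomial.map_comp, descPochhammer_map, comp_assoc]
    congr 1
    rw [Polynomial.map_sub, map_X, map_C, sub_comp, X_comp, C_comp, ha, hb,
      ]
    simp only [map_add, map_sub]
    ring
  -- each RHS term of key:
  have hR : ∀ r, (i.choose r : A) * ((descPochhammer A r).eval a * (descPochhammer A (i - r)).eval b)
      = (i.choose r : A) * (((descPochhammer ℝ r).comp (X - C k₂)).map (C : ℝ →+* B)
          * (C (((descPochhammer ℝ (i - r)).comp (X - C k₁)) : B) : A)) := by
    intro r
    congr 1
    rw [descPoch_eval_eq_comp, descPoch_eval_eq_comp]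
    congr 1
    · rw [ha, Polynomial.map_comp, descPochhammer_map]
      congr 1
      rw [Polynomial.map_sub, map_X, map_C]
    · rw [hb, comp_C, descPoch_eval_eq_comp]
  -- extract coefficients
  have hcoeff := congrArg (fun z : A => (z.coeff j₂).coeff j₁) key
  rw [hL] at hcoeff
  rw [coeff_coeff_comp] at hcoeff
  rw [Polynomial.finset_sum_coeff, Polynomial.finset_sum_coeff] at hcoeff
  have hterm : ∀ r ∈ Finset.range (i + 1),
      ((((i.choose r : A) * ((descPochhammer A r).eval a * (descPochhammer A (i - r)).eval b)).coeff j₂).coeff j₁)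
        = (i.choose r : ℝ) * c (i - r) j₁ k₁ * c r j₂ k₂ := by
    intro r _
    rw [hR r, coeff_coeff_term, c_eq_coeff, c_eq_coeff]
    ring
  rw [Finset.sum_congr rfl hterm] at hcoeff
  rw [← hcoeff, c_eq_coeff, Nat.choose_symm_add]
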